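/- arXiv:1402.0934 — 5 statements merged into one kernel-verified Lean document; each statement's English description precedes it below -/
import Mathlib

section
/- Let X_1,…,X_n be i.i.d. real random variables with common distribution function F, right endpoint x_F = sup{t : F(t) < 1}, F(s) < 1 for all s < x_F, and lim_{s↑x_F} (1−F(s)) = 0. Then for every integer m with 1 ≤ m ≤ n, the fragility distribution FD_{n,m} exists and is degenerate at m; that is, lim_{s↑x_F} P(N_{s,n} = m | N_{s,n} ≥ m) = 1. -/
/-!
With `p = 1 - F s`, independence gives `P(N ≥ m + 1) ≤ C(n, m+1) p^(m+1)` by a union bound over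
the `(m+1)`-subsets of indices, and `P(N ≥ m) ≥ P(N = m) ≥ p^m (1 - p)^(n-m)` by fixing which
`m` indices exceed `s`. Hence `P(N ≥ m + 1 | N ≥ m) = O(p)`, which tends to `0` as `s ↑ x_F`;
and `P(N ∈ A | N ≥ m)` lies within `P(N ≥ m + 1 | N ≥ m)` of `1{m ∈ A}`.
-/

open MeasureTheory ProbabilityTheory Filter Set Topology Classical

/-- Conditional probability `P(A | B)` as a real number. -/
noncomputable def condP {Ω : Type*} [MeasurableSpace Ω] (μ : Measure Ω) (A B : Set Ω) : ℝ :=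
  (μ (A ∩ B)).toReal / (μ B).toReal

open scoped ENNReal

section Exceedances

variable {Ω ι : Type*} [Fintype ι]

lemma setOf_succ_le_inter_setOf_le (N : Ω → ℕ) (m : ℕ) :
    {ω | m + 1 ≤ N ω} ∩ {ω | m ≤ N ω} = {ω | m + 1 ≤ N ω} :=
  inter_eq_left.2 fun ω (h : m + 1 ≤ N ω) => (by omega : m ≤ N ω)

/-- The count `N_{s,n}` of exceedances of the level `s`. -/
noncomputable def exceedances (X : ι → Ω → ℝ) (s : ℝ) (ω : Ω) : ℕ :=
  ∑ i, if s < X i ω then 1 else 0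

lemma exceedances_eq_card (X : ι → Ω → ℝ) (s : ℝ) (ω : Ω) :
    exceedances X s ω = (Finset.univ.filter fun i => s < X i ω).card :=
  (Finset.card_filter _ _).symm

variable [MeasurableSpace Ω] {μ : Measure Ω}

lemma condP_nonneg (μ : Measure Ω) (A B : Set Ω) : 0 ≤ condP μ A B :=
  div_nonneg ENNReal.toReal_nonneg ENNReal.toReal_nonneg

lemma abs_condP_mem_sub_le [IsFiniteMeasure μ] (N : Ω → ℕ) (m : ℕ) (A : Set ℕ)
    (hB : μ {ω | m ≤ N ω} ≠ 0) :
    |condP μ {ω | N ω ∈ A} {ω | m ≤ N ω} - if m ∈ A then 1 else 0| ≤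
      condP μ {ω | m + 1 ≤ N ω} {ω | m ≤ N ω} := by
  set B := {ω | m ≤ N ω}
  set R := {ω | m + 1 ≤ N ω}
  have hq : 0 < μ.real B := ENNReal.toReal_pos hB (measure_ne_top μ B)
  unfold condP
  change |μ.real ({ω | N ω ∈ A} ∩ B) / μ.real B - _| ≤ μ.real (R ∩ B) / μ.real B
  rw [setOf_succ_le_inter_setOf_le]
  split_ifs with hmA
  · have hcover : B ⊆ ({ω | N ω ∈ A} ∩ B) ∪ R := fun ω (h : m ≤ N ω) => by
      rcases h.eq_or_lt with h | h
      · exact Or.inl ⟨show N ω ∈ A from h ▸ hmA, h.le⟩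
      · exact Or.inr (show m + 1 ≤ N ω by omega)
    have hlow : μ.real B ≤ μ.real ({ω | N ω ∈ A} ∩ B) + μ.real R :=
      (measureReal_mono hcover).trans (measureReal_union_le _ _)
    have hup : μ.real ({ω | N ω ∈ A} ∩ B) ≤ μ.real B := measureReal_mono inter_subset_right
    rw [abs_sub_comm, abs_of_nonneg (sub_nonneg.2 ((div_le_one hq).2 hup)),
      one_sub_div hq.ne', div_le_div_iff_of_pos_right hq]
    linarith
  · have hsub : {ω | N ω ∈ A} ∩ B ⊆ R := fun ω ⟨(hA : N ω ∈ A), (hm : m ≤ N ω)⟩ => by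
      rcases hm.eq_or_lt with h | h
      · exact absurd (h ▸ hA) hmA
      · exact show m + 1 ≤ N ω by omega
    rw [sub_zero, abs_of_nonneg (div_nonneg measureReal_nonneg hq.le)]
    exact div_le_div_of_nonneg_right (measureReal_mono hsub) hq.le

lemma measure_preimage_Ioi_eq_ofReal [IsProbabilityMeasure μ] {Y : Ω → ℝ} (hY : Measurable Y)
    {F : ℝ → ℝ} (hF : ∀ t, F t = (μ {ω | Y ω ≤ t}).toReal) (s : ℝ) :
    μ (Y ⁻¹' Ioi s) = ENNReal.ofReal (1 - F s) := by
  rw [hF, ← compl_Iic, preimage_compl, prob_compl_eq_one_sub (hY measurableSet_Iic),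
    ← ENNReal.toReal_one, ← ENNReal.toReal_sub_of_le prob_le_one ENNReal.one_ne_top,
    ENNReal.ofReal_toReal (by simp)]
  rfl

variable {X : ι → Ω → ℝ} {s : ℝ}

lemma measure_exceedances_ge_le (hindep : iIndepFun X μ) {P : ℝ≥0∞}
    (htail : ∀ i, μ (X i ⁻¹' Ioi s) = P) (k : ℕ) :
    μ {ω | k ≤ exceedances X s ω} ≤ (Fintype.card ι).choose k * P ^ k := by
  have hcover : {ω | k ≤ exceedances X s ω} ⊆
      ⋃ T ∈ Finset.univ.powersetCard k, ⋂ i ∈ T, X i ⁻¹' Ioi s := by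
    intro ω (hω : k ≤ exceedances X s ω)
    rw [exceedances_eq_card] at hω
    obtain ⟨T, hT, hTk⟩ := Finset.exists_subset_card_eq hω
    exact mem_iUnion₂.2 ⟨T, Finset.mem_powersetCard.2 ⟨T.subset_univ, hTk⟩,
      mem_iInter₂.2 fun i hi => (Finset.mem_filter.1 (hT hi)).2⟩
  calc μ {ω | k ≤ exceedances X s ω}
      ≤ ∑ T ∈ Finset.univ.powersetCard k, μ (⋂ i ∈ T, X i ⁻¹' Ioi s) :=
        (measure_mono hcover).trans (measure_biUnion_finset_le _ _)
    _ = ∑ _T ∈ Finset.univ.powersetCard k, P ^ k := by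
        refine Finset.sum_congr rfl fun T hT => ?_
        rw [hindep.meas_biInter fun i _ => ⟨Ioi s, measurableSet_Ioi, rfl⟩,
          Finset.prod_congr rfl fun i _ => htail i, Finset.prod_const,
          (Finset.mem_powersetCard.1 hT).2]
    _ = (Fintype.card ι).choose k * P ^ k := by
        rw [Finset.sum_const, Finset.card_powersetCard, Finset.card_univ, nsmul_eq_mul]

lemma pow_mul_pow_le_measure_exceedances_eq [IsProbabilityMeasure μ]
    (hmeas : ∀ i, Measurable (X i)) (hindep : iIndepFun X μ) {P : ℝ≥0∞}
    (htail : ∀ i, μ (X i ⁻¹' Ioi s) = P) {m : ℕ} (hm : m ≤ Fintype.card ι) :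
    P ^ m * (1 - P) ^ (Fintype.card ι - m) ≤ μ {ω | exceedances X s ω = m} := by
  obtain ⟨T, -, hTm⟩ := Finset.exists_subset_card_eq (s := (Finset.univ : Finset ι)) hm
  let B : ι → Set ℝ := fun i => if i ∈ T then Ioi s else Iic s
  have hsub : (⋂ i, X i ⁻¹' B i) ⊆ {ω | exceedances X s ω = m} := by
    intro ω hω
    have hT : Finset.univ.filter (fun i => s < X i ω) = T := by
      ext i
      have hi := mem_iInter.1 hω i
      by_cases hiT : i ∈ T <;> simp_all [B]
    simp [exceedances_eq_card, hT, hTm]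
  have hB : ∀ i, μ (X i ⁻¹' B i) = if i ∈ T then P else 1 - P := by
    intro i
    by_cases hiT : i ∈ T
    · simp [B, hiT, htail]
    · simp only [B, hiT, if_false]
      rw [← compl_Ioi, preimage_compl, prob_compl_eq_one_sub (hmeas i measurableSet_Ioi), htail]
  calc P ^ m * (1 - P) ^ (Fintype.card ι - m)
      = ∏ i, μ (X i ⁻¹' B i) := by
        rw [← Finset.prod_mul_prod_compl T, Finset.prod_congr rfl fun i hi => (hB i).trans
          (if_pos hi), Finset.prod_congr rfl fun i hi => (hB i).trans
          (if_neg (Finset.mem_compl.1 hi)), Finset.prod_const, Finset.prod_const,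
          Finset.card_compl, hTm]
    _ = μ (⋂ i, X i ⁻¹' B i) :=
        (hindep.meas_iInter fun i => ⟨B i, by by_cases hiT : i ∈ T <;>
          simp [B, hiT, measurableSet_Ioi, measurableSet_Iic], rfl⟩).symm
    _ ≤ μ {ω | exceedances X s ω = m} := measure_mono hsub

lemma pow_mul_pow_le_measure_exceedances_ge [IsProbabilityMeasure μ]
    (hmeas : ∀ i, Measurable (X i)) (hindep : iIndepFun X μ) {P : ℝ≥0∞}
    (htail : ∀ i, μ (X i ⁻¹' Ioi s) = P) {m : ℕ} (hm : m ≤ Fintype.card ι) :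
    P ^ m * (1 - P) ^ (Fintype.card ι - m) ≤ μ {ω | m ≤ exceedances X s ω} :=
  (pow_mul_pow_le_measure_exceedances_eq hmeas hindep htail hm).trans
    (measure_mono fun _ h => (show _ = m from h).ge)

lemma measure_exceedances_ge_ne_zero [IsProbabilityMeasure μ]
    (hmeas : ∀ i, Measurable (X i)) (hindep : iIndepFun X μ) {p : ℝ} (hp0 : 0 < p)
    (hp1 : p < 1) (htail : ∀ i, μ (X i ⁻¹' Ioi s) = ENNReal.ofReal p) {m : ℕ}
    (hm : m ≤ Fintype.card ι) :
    μ {ω | m ≤ exceedances X s ω} ≠ 0 := by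
  have hP : ENNReal.ofReal p ≠ 0 := (ENNReal.ofReal_pos.2 hp0).ne'
  have hP1 : 1 - ENNReal.ofReal p ≠ 0 := (tsub_pos_of_lt (ENNReal.ofReal_lt_one.2 hp1)).ne'
  exact (pos_iff_ne_zero.2 (mul_ne_zero (pow_ne_zero _ hP) (pow_ne_zero _ hP1))).trans_le
    (pow_mul_pow_le_measure_exceedances_ge hmeas hindep htail hm) |>.ne'

lemma condP_exceedances_ge_succ_le [IsProbabilityMeasure μ]
    (hmeas : ∀ i, Measurable (X i)) (hindep : iIndepFun X μ) {p : ℝ} (hp0 : 0 ≤ p)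
    (hp : p ≤ 1 / 2) (htail : ∀ i, μ (X i ⁻¹' Ioi s) = ENNReal.ofReal p) {m : ℕ}
    (hm : m ≤ Fintype.card ι) :
    condP μ {ω | m + 1 ≤ exceedances X s ω} {ω | m ≤ exceedances X s ω} ≤
      (Fintype.card ι).choose (m + 1) * 2 ^ (Fintype.card ι - m) * p := by
  set n := Fintype.card ι
  have hupper : μ.real {ω | m + 1 ≤ exceedances X s ω} ≤ n.choose (m + 1) * p ^ (m + 1) := by
    have h := measure_exceedances_ge_le hindep htail (m + 1)
    rw [← ENNReal.ofReal_pow hp0, ← ENNReal.ofReal_natCast, ← ENNReal.ofReal_mul (by positivity)]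
      at h
    exact (ENNReal.toReal_le_of_le_ofReal (by positivity) h)
  have hlower : p ^ m * (1 - p) ^ (n - m) ≤ μ.real {ω | m ≤ exceedances X s ω} := by
    have h := pow_mul_pow_le_measure_exceedances_ge hmeas hindep htail hm
    rw [← ENNReal.ofReal_one, ← ENNReal.ofReal_sub _ hp0, ← ENNReal.ofReal_pow hp0,
      ← ENNReal.ofReal_pow (by linarith), ← ENNReal.ofReal_mul (by positivity)] at h
    exact (ENNReal.ofReal_le_iff_le_toReal (measure_ne_top μ _)).1 h
  have hhalf : 1 ≤ 2 ^ (n - m) * (1 - p) ^ (n - m) := by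
    rw [← mul_pow]; exact one_le_pow₀ (by linarith)
  unfold condP
  rw [setOf_succ_le_inter_setOf_le]
  refine div_le_of_le_mul₀ ENNReal.toReal_nonneg (by positivity) ?_
  change μ.real _ ≤ _ * μ.real _
  calc μ.real {ω | m + 1 ≤ exceedances X s ω}
      ≤ n.choose (m + 1) * p * p ^ m := by rw [pow_succ] at hupper; linarith
    _ ≤ n.choose (m + 1) * p * p ^ m * (2 ^ (n - m) * (1 - p) ^ (n - m)) :=
        le_mul_of_one_le_right (by positivity) hhalf
    _ = n.choose (m + 1) * 2 ^ (n - m) * p * (p ^ m * (1 - p) ^ (n - m)) := by ring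
    _ ≤ n.choose (m + 1) * 2 ^ (n - m) * p * μ.real {ω | m ≤ exceedances X s ω} :=
        mul_le_mul_of_nonneg_left hlower (by positivity)

end Exceedances

theorem stmt0_general {Ω : Type*} [MeasurableSpace Ω] (μ : Measure Ω) [IsProbabilityMeasure μ]
    (n : ℕ) (X : Fin n → Ω → ℝ) (hmeas : ∀ i, Measurable (X i))
    (hindep : iIndepFun X μ)
    (F : ℝ → ℝ) (hF : ∀ i t, F t = (μ {ω | X i ω ≤ t}).toReal)
    (xF : ℝ)
    (hFlt : ∀ s < xF, F s < 1)
    (hFlim : Tendsto (fun s => 1 - F s) (𝓝[<] xF) (𝓝 0)) :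
    ∀ m : ℕ, 1 ≤ m → m ≤ n →
      (∀ A : Set ℕ, A ⊆ Set.Icc m n →
        Tendsto
          (fun s => condP μ {ω | (∑ i, if s < X i ω then 1 else 0) ∈ A}
            {ω | m ≤ ∑ i, if s < X i ω then 1 else 0})
          (𝓝[<] xF) (𝓝 (if m ∈ A then 1 else 0))) ∧
      Tendsto
        (fun s => condP μ {ω | (∑ i, if s < X i ω then 1 else 0) = m}
          {ω | m ≤ ∑ i, if s < X i ω then 1 else 0})
        (𝓝[<] xF) (𝓝 1) := by
  intro m _ hmn
  have hm : m ≤ Fintype.card (Fin n) := by simpa using hmn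
  have htail s i : μ (X i ⁻¹' Ioi s) = ENNReal.ofReal (1 - F s) :=
    measure_preimage_Ioi_eq_ofReal (hmeas i) (hF i) s
  have hp : ∀ᶠ s in 𝓝[<] xF, 0 < 1 - F s ∧ 1 - F s ≤ 1 / 2 := by
    filter_upwards [self_mem_nhdsWithin, hFlim.eventually (ge_mem_nhds one_half_pos)]
      with s hs hs2
    exact ⟨sub_pos.2 (hFlt s hs), hs2⟩
  have hratio : Tendsto (fun s => condP μ {ω | m + 1 ≤ exceedances X s ω}
      {ω | m ≤ exceedances X s ω}) (𝓝[<] xF) (𝓝 0) := by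
    refine squeeze_zero' (Eventually.of_forall fun _ => condP_nonneg _ _ _)
      (hp.mono fun s hs => condP_exceedances_ge_succ_le hmeas hindep hs.1.le hs.2 (htail s) hm)
      ?_
    simpa using hFlim.const_mul ((Fintype.card (Fin n)).choose (m + 1) * 2 ^ (n - m) : ℝ)
  have hlim (A : Set ℕ) : Tendsto (fun s => condP μ {ω | exceedances X s ω ∈ A}
      {ω | m ≤ exceedances X s ω}) (𝓝[<] xF) (𝓝 (if m ∈ A then 1 else 0)) :=
    tendsto_iff_norm_sub_tendsto_zero.2 <| squeeze_zero' (Eventually.of_forall fun _ =>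
      norm_nonneg _) (hp.mono fun s hs => abs_condP_mem_sub_le _ m A
        (measure_exceedances_ge_ne_zero hmeas hindep hs.1 (by linarith) (htail s) hm)) hratio
  have hsingleton := hlim {m}
  rw [if_pos (mem_singleton m)] at hsingleton
  exact ⟨fun A _ => hlim A, hsingleton⟩

/-- For i.i.d. random variables `X_1, …, X_n` with common distribution
function `F`, right endpoint `x_F = sup {t | F t < 1}` with `F s < 1` for `s < x_F` and
`1 - F s → 0` as `s ↑ x_F`, the fragility distribution `FD_{n,m}` exists and is degenerate
at `m` for every `1 ≤ m ≤ n`; in particular `P(N_{s,n} = m | N_{s,n} ≥ m) → 1` as `s ↑ x_F`. -/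
theorem stmt0 {Ω : Type*} [MeasurableSpace Ω] (μ : Measure Ω) [IsProbabilityMeasure μ]
    (n : ℕ) (X : Fin n → Ω → ℝ) (hmeas : ∀ i, Measurable (X i))
    (hindep : iIndepFun X μ)
    (hident : ∀ i j, Measure.map (X i) μ = Measure.map (X j) μ)
    (F : ℝ → ℝ) (hF : ∀ i t, F t = (μ {ω | X i ω ≤ t}).toReal)
    (xF : ℝ) (hxF : xF = sSup {t | F t < 1})
    (hFlt : ∀ s < xF, F s < 1)
    (hFlim : Tendsto (fun s => 1 - F s) (𝓝[<] xF) (𝓝 0)) :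
    ∀ m : ℕ, 1 ≤ m → m ≤ n →
      (∀ A : Set ℕ, A ⊆ Set.Icc m n →
        Tendsto
          (fun s => condP μ {ω | (∑ i, if s < X i ω then 1 else 0) ∈ A}
            {ω | m ≤ ∑ i, if s < X i ω then 1 else 0})
          (𝓝[<] xF) (𝓝 (if m ∈ A then 1 else 0))) ∧
      Tendsto
        (fun s => condP μ {ω | (∑ i, if s < X i ω then 1 else 0) = m}
          {ω | m ≤ ∑ i, if s < X i ω then 1 else 0})
        (𝓝[<] xF) (𝓝 1) :=
  stmt0_general μ n X hmeas hindep F hF xF hFlt hFlim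
end

section
/- Let X_1,…,X_n be identically distributed real random variables with common distribution function F and right endpoint x_F = sup{t : F(t) < 1}, let 1 ≤ m < n, and assume P(N_{s,n} ≥ m+1) > 0 for all s < x_F. If L := lim_{s↑x_F} P(N_{s,n} = m)/P(N_{s,n} ≥ m+1) exists and is finite, and FD_{n,m+1}(B) = lim_{s↑x_F} P(N_{s,n} ∈ B | N_{s,n} ≥ m+1) exists for every B ⊆ {m+1,…,n}, then FD_{n,m}(A) exists for every A ⊆ {m,…,n} and FD_{n,m}(A) = (FD_{n,m+1}(A ∩ {m+1,…,n}) + L·1{m ∈ A}) / (1 + L). -/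
open MeasureTheory ProbabilityTheory Filter Set Topology Classical

/-!
Split `{N ≥ m}` into the disjoint events `{N ≥ m + 1}` and `{N = m}`. Dividing numerator and
denominator of `P(N ∈ A | N ≥ m)` by `P(N ≥ m + 1)` expresses it, for every threshold `s < x_F`,
as a continuous function of `P(N ∈ A | N ≥ m + 1)` and of the ratio `P(N = m) / P(N ≥ m + 1)`;
the limits then pass through, since `1 + L ≥ 1`.
-/

section

variable {Ω : Type*} [MeasurableSpace Ω] (μ : Measure Ω)

theorem condP_union_of_disjoint [IsFiniteMeasure μ] {A E G : Set Ω} (hG : MeasurableSet G)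
    (hEG : Disjoint E G) (hE : μ E ≠ 0) :
    condP μ A (E ∪ G) =
      (condP μ A E + (μ (A ∩ G)).toReal / (μ E).toReal) / (1 + (μ G).toReal / (μ E).toReal) := by
  have hnum : μ (A ∩ (E ∪ G)) = μ (A ∩ E) + μ (A ∩ G) := by
    rw [← measure_inter_add_sdiff (A ∩ (E ∪ G)) hG, add_comm]
    congr 2
    · ext ω
      have hnotG := hEG.notMem_of_mem_left (a := ω)
      simp only [Set.mem_sdiff, mem_inter_iff, mem_union]
      tauto
    · ext ω
      simp only [mem_inter_iff, mem_union]
      tauto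
  have hE' : 0 < (μ E).toReal := ENNReal.toReal_pos hE (measure_ne_top μ E)
  rw [condP, condP, hnum, measure_union hEG hG, ENNReal.toReal_add (measure_ne_top μ _)
    (measure_ne_top μ _), ENNReal.toReal_add (measure_ne_top μ _) (measure_ne_top μ _)]
  field_simp

theorem condP_ge_eq_condP_ge_succ [IsFiniteMeasure μ] {N : Ω → ℕ} (hN : Measurable N)
    (m : ℕ) (A : Set ℕ) (hpos : μ {ω | m + 1 ≤ N ω} ≠ 0) :
    condP μ {ω | N ω ∈ A} {ω | m ≤ N ω} =
      (condP μ {ω | N ω ∈ A ∩ Ici (m + 1)} {ω | m + 1 ≤ N ω} +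
          (μ {ω | N ω = m}).toReal / (μ {ω | m + 1 ≤ N ω}).toReal * (if m ∈ A then 1 else 0)) /
        (1 + (μ {ω | N ω = m}).toReal / (μ {ω | m + 1 ≤ N ω}).toReal) := by
  have hsplit : {ω | m ≤ N ω} = {ω | m + 1 ≤ N ω} ∪ {ω | N ω = m} := by
    ext ω; simp only [mem_ofPred_eq, mem_union]; omega
  have hdisj : Disjoint {ω | m + 1 ≤ N ω} {ω | N ω = m} := by
    refine Set.disjoint_left.mpr fun ω (h1 : m + 1 ≤ N ω) (h2 : N ω = m) => ?_
    omega
  have hupper : {ω | N ω ∈ A} ∩ {ω | m + 1 ≤ N ω} =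
      {ω | N ω ∈ A ∩ Ici (m + 1)} ∩ {ω | m + 1 ≤ N ω} := by
    ext ω; simp only [mem_inter_iff, mem_ofPred_eq, mem_Ici]; tauto
  have hlower : (μ ({ω | N ω ∈ A} ∩ {ω | N ω = m})).toReal =
      (μ {ω | N ω = m}).toReal * (if m ∈ A then 1 else 0) := by
    split_ifs with hm
    · have hsub : {ω | N ω = m} ⊆ {ω | N ω ∈ A} := fun ω (h : N ω = m) =>
        show N ω ∈ A from h ▸ hm
      rw [inter_eq_right.mpr hsub, mul_one]
    · have hdisjA : Disjoint {ω | N ω ∈ A} {ω | N ω = m} :=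
        Set.disjoint_left.mpr fun ω (hA : N ω ∈ A) (h : N ω = m) => hm (h ▸ hA)
      rw [Set.disjoint_iff_inter_eq_empty.mp hdisjA, measure_empty, ENNReal.toReal_zero,
        mul_zero]
  have hG : MeasurableSet {ω | N ω = m} := hN (measurableSet_singleton m)
  rw [hsplit, condP_union_of_disjoint μ hG hdisj hpos, hlower,
    condP, condP, hupper, mul_div_right_comm]

end

theorem measurable_exceedanceCount {Ω ι : Type*} [MeasurableSpace Ω] [Fintype ι]
    {X : ι → Ω → ℝ} (hX : ∀ i, Measurable (X i)) (s : ℝ) :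
    Measurable fun ω => ∑ i, if s < X i ω then 1 else 0 :=
  Finset.measurable_sum _ fun i _ =>
    Measurable.ite (measurableSet_lt measurable_const (hX i)) measurable_const measurable_const

theorem stmt1_general {Ω : Type*} [MeasurableSpace Ω] (μ : Measure Ω) [IsProbabilityMeasure μ]
    (n : ℕ) (X : Fin n → Ω → ℝ) (hmeas : ∀ i, Measurable (X i))
    (xF : ℝ)
    (m : ℕ)
    (hpos : ∀ s < xF, 0 < μ {ω | m + 1 ≤ ∑ i, if s < X i ω then 1 else 0})
    (L : ℝ)
    (hL : Tendsto
      (fun s => (μ {ω | (∑ i, if s < X i ω then 1 else 0) = m}).toReal /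
        (μ {ω | m + 1 ≤ ∑ i, if s < X i ω then 1 else 0}).toReal)
      (𝓝[<] xF) (𝓝 L))
    (FD : Set ℕ → ℝ)
    (hFD : ∀ B : Set ℕ, B ⊆ Set.Icc (m + 1) n →
      Tendsto
        (fun s => condP μ {ω | (∑ i, if s < X i ω then 1 else 0) ∈ B}
          {ω | m + 1 ≤ ∑ i, if s < X i ω then 1 else 0})
        (𝓝[<] xF) (𝓝 (FD B))) :
    ∀ A : Set ℕ, A ⊆ Set.Icc m n →
      Tendsto
        (fun s => condP μ {ω | (∑ i, if s < X i ω then 1 else 0) ∈ A}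
          {ω | m ≤ ∑ i, if s < X i ω then 1 else 0})
        (𝓝[<] xF)
        (𝓝 ((FD (A ∩ Set.Ici (m + 1)) + L * (if m ∈ A then 1 else 0)) / (1 + L))) := by
  intro A hA
  have hL0 : 0 ≤ L := ge_of_tendsto hL (Eventually.of_forall fun s => by positivity)
  have hupper : A ∩ Ici (m + 1) ⊆ Icc (m + 1) n := fun k hk => ⟨hk.2, (hA hk.1).2⟩
  have hlim := ((hFD _ hupper).add (hL.mul_const (if m ∈ A then 1 else 0))).div
    (tendsto_const_nhds.add hL) (by linarith : (1 : ℝ) + L ≠ 0)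
  refine hlim.congr' ?_
  filter_upwards [self_mem_nhdsWithin] with s hs
  exact (condP_ge_eq_condP_ge_succ μ (measurable_exceedanceCount hmeas s) m A
    (hpos s hs).ne').symm

/-- For identically distributed `X_1, …, X_n` with common distribution
function `F` and right endpoint `x_F`, if `P(N_{s,n} ≥ m+1) > 0` for all `s < x_F`,
`L = lim_{s↑x_F} P(N_{s,n} = m)/P(N_{s,n} ≥ m+1)` exists (finite) and `FD_{n,m+1}` exists,
then `FD_{n,m}` exists and
`FD_{n,m}(A) = (FD_{n,m+1}(A ∩ {m+1,…,n}) + L·1{m ∈ A}) / (1 + L)`. -/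
theorem stmt1 {Ω : Type*} [MeasurableSpace Ω] (μ : Measure Ω) [IsProbabilityMeasure μ]
    (n : ℕ) (X : Fin n → Ω → ℝ) (hmeas : ∀ i, Measurable (X i))
    (hident : ∀ i j, Measure.map (X i) μ = Measure.map (X j) μ)
    (F : ℝ → ℝ) (hF : ∀ i t, F t = (μ {ω | X i ω ≤ t}).toReal)
    (xF : ℝ) (hxF : xF = sSup {t | F t < 1})
    (m : ℕ) (hm : 1 ≤ m) (hmn : m < n)
    (hpos : ∀ s < xF, 0 < μ {ω | m + 1 ≤ ∑ i, if s < X i ω then 1 else 0})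
    (L : ℝ)
    (hL : Tendsto
      (fun s => (μ {ω | (∑ i, if s < X i ω then 1 else 0) = m}).toReal /
        (μ {ω | m + 1 ≤ ∑ i, if s < X i ω then 1 else 0}).toReal)
      (𝓝[<] xF) (𝓝 L))
    (FD : Set ℕ → ℝ)
    (hFD : ∀ B : Set ℕ, B ⊆ Set.Icc (m + 1) n →
      Tendsto
        (fun s => condP μ {ω | (∑ i, if s < X i ω then 1 else 0) ∈ B}
          {ω | m + 1 ≤ ∑ i, if s < X i ω then 1 else 0})
        (𝓝[<] xF) (𝓝 (FD B))) :
    ∀ A : Set ℕ, A ⊆ Set.Icc m n →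
      Tendsto
        (fun s => condP μ {ω | (∑ i, if s < X i ω then 1 else 0) ∈ A}
          {ω | m ≤ ∑ i, if s < X i ω then 1 else 0})
        (𝓝[<] xF)
        (𝓝 ((FD (A ∩ Set.Ici (m + 1)) + L * (if m ∈ A then 1 else 0)) / (1 + L))) :=
  stmt1_general μ n X hmeas xF m hpos L hL FD hFD
end

section
/- Let G_1 be the distribution function of the density g_1 on [0,1] given by g_1(y) = 2 if y ∈ [1 − 2^{−k}, 1 − 3·2^{−(k+2)}] for some k ∈ {0,1,2,…} and g_1(y) = 0 otherwise. Then the limit lim_{y→1⁻} (1 − G_1(y))/(1 − y) does not exist; in particular, along y_k = 1 − 2^{−k} the ratio equals 1 while along y_k = 1 − 3·2^{−(k+2)} the ratio equals 2/3. -/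
open MeasureTheory Filter Set Topology Classical

/-! Each block `[1 - 2⁻ᵏ, 1 - 3·2⁻⁽ᵏ⁺²⁾]` has length `2⁻⁽ᵏ⁺²⁾`, so it carries mass `2⁻⁽ᵏ⁺¹⁾`,
exactly the distance from its start to the next block's start. Hence `G₁(1 - 2⁻ᵏ) = 1 - 2⁻ᵏ` and the
ratio is `1` at block starts, while at a block end the missing mass `2⁻⁽ᵏ⁺¹⁾` sits over the distance
`3·2⁻⁽ᵏ⁺²⁾` to `1`, giving `2/3`. Two sequences tending to `1⁻` with different limits of the ratio
rule out a limit. -/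

/-- The density `g₁` on `[0,1]`: equal to `2` on the intervals
`[1 - 2⁻ᵏ, 1 - 3·2⁻⁽ᵏ⁺²⁾]`, `k ∈ ℕ`, and `0` elsewhere. -/
noncomputable def g1 (y : ℝ) : ℝ :=
  if ∃ k : ℕ, 1 - 1 / 2 ^ k ≤ y ∧ y ≤ 1 - 3 / 2 ^ (k + 2) then 2 else 0

/-- The distribution function of `g₁`. -/
noncomputable def G1 (y : ℝ) : ℝ := ∫ t in (0:ℝ)..y, g1 t

noncomputable def blockStart (k : ℕ) : ℝ := 1 - 1 / 2 ^ k

noncomputable def blockEnd (k : ℕ) : ℝ := 1 - 3 / 2 ^ (k + 2)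

lemma blockStart_strictMono : StrictMono blockStart :=
  strictMono_nat_of_lt_succ fun k => by
    rw [blockStart, blockStart]
    gcongr 1 - 1 / ?_
    exact pow_lt_pow_right₀ one_lt_two k.lt_succ_self

lemma blockEnd_monotone : Monotone blockEnd :=
  monotone_nat_of_le_succ fun k => by
    rw [blockEnd, blockEnd]
    gcongr 1 - 3 / ?_
    exact pow_le_pow_right₀ one_le_two (by omega)

lemma blockEnd_sub_blockStart (k : ℕ) : blockEnd k - blockStart k = 1 / 2 ^ (k + 2) := by
  rw [blockEnd, blockStart, pow_add]
  field_simp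
  ring

lemma blockStart_succ_sub_blockEnd (k : ℕ) :
    blockStart (k + 1) - blockEnd k = 1 / 2 ^ (k + 2) := by
  rw [blockEnd, blockStart, pow_add, pow_succ]
  field_simp
  ring

lemma g1_eq_two_of_mem {k : ℕ} {y : ℝ} (hy : y ∈ Icc (blockStart k) (blockEnd k)) :
    g1 y = 2 :=
  if_pos ⟨k, hy⟩

lemma g1_eq_zero_of_mem_gap {k : ℕ} {y : ℝ} (hy : y ∈ Ioo (blockEnd k) (blockStart (k + 1))) :
    g1 y = 0 := by
  refine if_neg ?_
  rintro ⟨j, hj_start, hj_end⟩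
  have hjk : j ≤ k := Nat.lt_succ_iff.mp <| blockStart_strictMono.lt_iff_lt.mp <|
    lt_of_le_of_lt hj_start hy.2
  exact (blockEnd_monotone hjk).not_gt (lt_of_lt_of_le hy.1 hj_end)

lemma measurable_g1 : Measurable g1 :=
  Measurable.ite (by
      simp only [Set.ofPred_exists]
      exact MeasurableSet.iUnion fun k => measurableSet_Icc)
    measurable_const measurable_const

lemma intervalIntegrable_g1 (a b : ℝ) : IntervalIntegrable g1 volume a b := by
  refine (intervalIntegrable_const (c := (2 : ℝ))).mono_fun' measurable_g1.aestronglyMeasurable ?_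
  refine Eventually.of_forall fun t => show ‖g1 t‖ ≤ 2 from ?_
  unfold g1
  split_ifs <;> norm_num

lemma G1_add_integral (x y : ℝ) : G1 x + ∫ t in x..y, g1 t = G1 y :=
  intervalIntegral.integral_add_adjacent_intervals (intervalIntegrable_g1 _ _)
    (intervalIntegrable_g1 _ _)

lemma G1_blockEnd (k : ℕ) : G1 (blockEnd k) = G1 (blockStart k) + 1 / 2 ^ (k + 1) := by
  rw [← G1_add_integral (blockStart k)]
  have hle : blockStart k ≤ blockEnd k :=
    sub_nonneg.mp (by rw [blockEnd_sub_blockStart]; positivity)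
  rw [intervalIntegral.integral_congr (g := fun _ => (2 : ℝ)) fun t ht =>
    g1_eq_two_of_mem (uIcc_of_le hle ▸ ht)]
  rw [intervalIntegral.integral_const, smul_eq_mul, blockEnd_sub_blockStart, pow_succ, pow_succ]
  field_simp

lemma G1_blockStart_succ (k : ℕ) : G1 (blockStart (k + 1)) = G1 (blockEnd k) := by
  rw [← G1_add_integral (blockEnd k)]
  have hle : blockEnd k ≤ blockStart (k + 1) :=
    sub_nonneg.mp (by rw [blockStart_succ_sub_blockEnd]; positivity)
  rw [intervalIntegral.integral_congr_Ioo_of_le (g := fun _ => (0 : ℝ)) hle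
    fun t ht => g1_eq_zero_of_mem_gap ht]
  simp

lemma G1_blockStart (k : ℕ) : G1 (blockStart k) = blockStart k := by
  induction k with
  | zero => simp [G1, blockStart]
  | succ k ih =>
    rw [G1_blockStart_succ, G1_blockEnd, ih, blockStart, blockStart, pow_succ]
    field_simp
    ring

lemma ratio_blockStart (k : ℕ) : (1 - G1 (blockStart k)) / (1 - blockStart k) = 1 := by
  rw [G1_blockStart, div_self]
  simp [blockStart]

lemma ratio_blockEnd (k : ℕ) : (1 - G1 (blockEnd k)) / (1 - blockEnd k) = 2 / 3 := by
  rw [G1_blockEnd, G1_blockStart, blockStart, blockEnd, pow_succ, pow_succ, pow_succ]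
  field_simp
  ring

lemma tendsto_one_sub_div_two_pow_nhdsLT {c : ℝ} (hc : 0 < c) :
    Tendsto (fun k : ℕ => 1 - c / 2 ^ k) atTop (𝓝[<] 1) := by
  refine tendsto_nhdsWithin_of_tendsto_nhds_of_eventually_within _ ?_
    (Eventually.of_forall fun k => sub_lt_self (1 : ℝ) (by positivity))
  simpa using tendsto_const_nhds.sub <| tendsto_const_nhds.div_atTop <|
    tendsto_pow_atTop_atTop_of_one_lt (one_lt_two : (1 : ℝ) < 2)

lemma tendsto_blockStart_nhdsLT : Tendsto blockStart atTop (𝓝[<] 1) :=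
  tendsto_one_sub_div_two_pow_nhdsLT one_pos

lemma tendsto_blockEnd_nhdsLT : Tendsto blockEnd atTop (𝓝[<] 1) :=
  (tendsto_one_sub_div_two_pow_nhdsLT three_pos).comp (tendsto_add_atTop_nat 2)

/-- The limit `lim_{y→1⁻} (1 - G₁(y))/(1 - y)` does not exist; along
`y_k = 1 - 2⁻ᵏ` the ratio is `1`, and along `y_k = 1 - 3·2⁻⁽ᵏ⁺²⁾` it is `2/3`. -/
theorem stmt2 :
    (∀ k : ℕ,
      (1 - G1 (1 - 1 / 2 ^ k)) / (1 - (1 - 1 / 2 ^ k)) = 1 ∧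
      (1 - G1 (1 - 3 / 2 ^ (k + 2))) / (1 - (1 - 3 / 2 ^ (k + 2))) = 2 / 3) ∧
    ¬ ∃ L : ℝ, Tendsto (fun y => (1 - G1 y) / (1 - y)) (𝓝[<] (1:ℝ)) (𝓝 L) := by
  refine ⟨fun k => ⟨ratio_blockStart k, ratio_blockEnd k⟩, ?_⟩
  rintro ⟨L, hL⟩
  have h_start := hL.comp tendsto_blockStart_nhdsLT
  have h_end := hL.comp tendsto_blockEnd_nhdsLT
  simp only [Function.comp_def, ratio_blockStart, ratio_blockEnd,
    tendsto_const_nhds_iff] at h_start h_end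
  norm_num [← h_start] at h_end
end

section
/- Let θ > 0, let p be a probability distribution on {1, 2, …}, let m ≥ 1, and for τ > 0 let N^τ = Σ_{i=1}^{P_τ} ξ_i where P_τ ~ Poisson(θτ) and ξ_1, ξ_2, … are i.i.d. with distribution p, independent of P_τ. Set I_m = min{i ≥ 1 : p^{*i}(ℤ_m) > 0}, where p^{*i} is the i-fold convolution of p and ℤ_m = {m, m+1, …}. Then for every A ⊆ ℤ_m, lim_{τ→0⁺} P(N^τ ∈ A | N^τ ≥ m) = p^{*I_m}(A)/p^{*I_m}(ℤ_m). In particular, for m = 1 the limit distribution is p itself. -/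
open Filter Set Topology Classical

/-!
Conditioning on the Poisson count, `P(N^τ ∈ A) = ∑ᵢ poi_λ(i) p^{*i}(A)` with `λ = θτ`. For
`A ⊆ ℤ_m` every term with `i < I_m` vanishes, so numerator and denominator are both
`e^{-λ} λ^{I_m}` times a power series in `λ` with bounded coefficients. After cancelling this
common factor the ratio is continuous at `λ = 0`, where it equals the quotient of the constant
terms `p^{*I_m}(A) / I_m!` and `p^{*I_m}(ℤ_m) / I_m!`. For `m = 1` one has `I_1 = 1` and
`p^{*1} = p`.
-/

/-- `convPow p i` is the `i`-fold convolution `p^{*i}` of a distribution `p` on `ℕ`. -/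
noncomputable def convPow (p : ℕ → ℝ) : ℕ → ℕ → ℝ
  | 0, k => if k = 0 then 1 else 0
  | (i + 1), k => ∑ j ∈ Finset.range (k + 1), convPow p i j * p (k - j)

/-- The Poisson(`lam`) probability mass function. -/
noncomputable def poiPMF (lam : ℝ) (i : ℕ) : ℝ := Real.exp (-lam) * lam ^ i / i.factorial

/-- The probability mass function of the compound Poisson distribution with Poisson rate
`lam` and cluster (compounding) distribution `p`. -/
noncomputable def cpPMF (lam : ℝ) (p : ℕ → ℝ) (k : ℕ) : ℝ :=
  ∑' i : ℕ, poiPMF lam i * convPow p i k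

noncomputable def massOn (f : ℕ → ℝ) (P : ℕ → Prop) [DecidablePred P] : ℝ :=
  ∑' k, if P k then f k else 0

section MassOn

variable {f : ℕ → ℝ} (P : ℕ → Prop) [DecidablePred P]

lemma summable_ite_of_nonneg (hf0 : ∀ k, 0 ≤ f k) (hf : Summable f) :
    Summable fun k => if P k then f k else 0 :=
  hf.of_nonneg_of_le (fun k => by split_ifs <;> simp [hf0 k])
    (fun k => by split_ifs <;> simp [hf0 k])

lemma massOn_nonneg (hf0 : ∀ k, 0 ≤ f k) : 0 ≤ massOn f P :=
  tsum_nonneg fun k => by split_ifs <;> simp [hf0 k]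

lemma massOn_mono (hf0 : ∀ k, 0 ≤ f k) (hf : Summable f) {Q : ℕ → Prop} [DecidablePred Q]
    (hPQ : ∀ k, P k → Q k) : massOn f P ≤ massOn f Q := by
  refine Summable.tsum_le_tsum (fun k => ?_) (summable_ite_of_nonneg P hf0 hf)
    (summable_ite_of_nonneg Q hf0 hf)
  by_cases hP : P k
  · simp [hP, hPQ k hP]
  · split_ifs <;> simp [hf0 k]

lemma massOn_le_tsum (hf0 : ∀ k, 0 ≤ f k) (hf : Summable f) : massOn f P ≤ ∑' k, f k :=
  Summable.tsum_le_tsum (fun k => by split_ifs <;> simp [hf0 k])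
    (summable_ite_of_nonneg P hf0 hf) hf

lemma massOn_eq_tsum (hP : ∀ k, ¬ P k → f k = 0) : massOn f P = ∑' k, f k :=
  tsum_congr fun k => by by_cases h : P k <;> simp [h, hP]

end MassOn

section ConvPow

variable {p : ℕ → ℝ}

lemma convPow_nonneg (hpnn : ∀ k, 0 ≤ p k) : ∀ i k, 0 ≤ convPow p i k
  | 0, k => by simp only [convPow]; split_ifs <;> norm_num
  | i + 1, k => Finset.sum_nonneg fun j _ => mul_nonneg (convPow_nonneg hpnn i j) (hpnn _)

lemma hasSum_convPow (hpnn : ∀ k, 0 ≤ p k) (hpsum : HasSum p 1) : ∀ i, HasSum (convPow p i) 1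
  | 0 => by simpa [convPow] using hasSum_ite_eq 0 (1 : ℝ)
  | i + 1 => by
      have ih := hasSum_convPow hpnn hpsum i
      have hprod : Summable fun x : ℕ × ℕ => convPow p i x.1 * p x.2 :=
        ih.summable.mul_of_nonneg hpsum.summable (convPow_nonneg hpnn i) hpnn
      have hcauchy := ih.summable.tsum_mul_tsum_eq_tsum_sum_range hpsum.summable hprod
      rw [ih.tsum_eq, hpsum.tsum_eq, one_mul] at hcauchy
      exact (summable_sum_mul_range_of_summable_mul hprod).hasSum_iff.mpr hcauchy.symm

lemma convPow_eq_zero_of_lt (hp0 : p 0 = 0) : ∀ {i k}, k < i → convPow p i k = 0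
  | i + 1, k, hki => Finset.sum_eq_zero fun j hj => by
      rcases lt_or_ge j i with hji | hji
      · rw [convPow_eq_zero_of_lt hp0 hji, zero_mul]
      · rw [Finset.mem_range] at hj
        rw [show k - j = 0 by omega, hp0, mul_zero]

lemma convPow_one (p : ℕ → ℝ) : convPow p 1 = p := by
  funext k
  simp [convPow]

lemma abs_massOn_convPow_le_one (hpnn : ∀ k, 0 ≤ p k) (hpsum : HasSum p 1) (P : ℕ → Prop)
    [DecidablePred P] (i : ℕ) : |massOn (convPow p i) P| ≤ 1 := by
  have hsum := hasSum_convPow hpnn hpsum i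
  rw [abs_of_nonneg (massOn_nonneg P (convPow_nonneg hpnn i)), ← hsum.tsum_eq]
  exact massOn_le_tsum P (convPow_nonneg hpnn i) hsum.summable

end ConvPow

lemma tendsto_tsum_pow_mul_of_abs_le {c : ℕ → ℝ} {C : ℝ} (hc : ∀ j, |c j| ≤ C) :
    Tendsto (fun x : ℝ => ∑' j, x ^ j * c j) (𝓝 0) (𝓝 (c 0)) := by
  have hcont : ContinuousOn (fun x : ℝ => ∑' j, x ^ j * c j) (Icc (-(1 / 2)) (1 / 2)) := by
    refine continuousOn_tsum (fun j => ((continuous_pow j).mul continuous_const).continuousOn)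
      (summable_geometric_two.mul_left C) fun j x hx => ?_
    rw [norm_mul, norm_pow, mul_comm]
    exact mul_le_mul (hc j) (pow_le_pow_left₀ (norm_nonneg x) (abs_le.2 hx) j)
      (by positivity) ((abs_nonneg _).trans (hc j))
  have h0 : (∑' j, (0 : ℝ) ^ j * c j) = c 0 :=
    (tsum_eq_single 0 fun j hj => by simp [hj]).trans (by simp)
  have hnhds : Icc (-(1 / 2)) (1 / 2) ∈ 𝓝 (0 : ℝ) := Icc_mem_nhds (by norm_num) (by norm_num)
  simpa [h0] using (hcont.continuousAt hnhds).tendsto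

lemma poiPMF_nonneg {lam : ℝ} (hlam : 0 ≤ lam) (i : ℕ) : 0 ≤ poiPMF lam i := by
  unfold poiPMF; positivity

lemma summable_poiPMF (lam : ℝ) : Summable (poiPMF lam) :=
  ((Real.summable_pow_div_factorial lam).mul_left (Real.exp (-lam))).congr fun i => by
    simp [poiPMF, mul_div_assoc]

lemma tsum_poiPMF_mul_eq_of_eq_zero_of_lt {w : ℕ → ℝ} {I : ℕ} (hw : ∀ i < I, w i = 0)
    (lam : ℝ) : ∑' i, poiPMF lam i * w i
      = Real.exp (-lam) * lam ^ I * ∑' j, lam ^ j * (w (I + j) / (I + j).factorial) := by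
  have hsupp : Function.support (fun i => poiPMF lam i * w i) ⊆ range (I + ·) := by
    intro i hi
    by_cases hiI : i < I
    · exact absurd (by simp [hw i hiI]) hi
    · exact ⟨i - I, Nat.add_sub_cancel' (not_lt.1 hiI)⟩
  rw [← (add_right_injective I).tsum_eq hsupp, ← tsum_mul_left]
  refine tsum_congr fun j => ?_
  simp only [poiPMF, pow_add]
  ring

lemma tendsto_tsum_poiPMF_mul_div_pow {w : ℕ → ℝ} {C : ℝ} (hwC : ∀ i, |w i| ≤ C) {I : ℕ}
    (hw : ∀ i < I, w i = 0) :
    Tendsto (fun lam => (∑' i, poiPMF lam i * w i) / lam ^ I) (𝓝[≠] 0)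
      (𝓝 (w I / I.factorial)) := by
  have hcoeff : ∀ j, |w (I + j) / (I + j).factorial| ≤ C := fun j => by
    rw [abs_div, Nat.abs_cast]
    exact (div_le_self (abs_nonneg _) (mod_cast (I + j).factorial_pos)).trans (hwC _)
  have hlim := ((Real.continuous_exp.comp continuous_neg).tendsto 0).mul
    (tendsto_tsum_pow_mul_of_abs_le hcoeff)
  simp only [Function.comp_apply, neg_zero, Real.exp_zero, one_mul, add_zero] at hlim
  refine (hlim.mono_left nhdsWithin_le_nhds).congr' ?_
  filter_upwards [self_mem_nhdsWithin] with lam (hlam : lam ≠ 0)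
  rw [tsum_poiPMF_mul_eq_of_eq_zero_of_lt hw, mul_right_comm, mul_div_cancel_right₀ _
    (pow_ne_zero I hlam)]

lemma tendsto_tsum_poiPMF_mul_div_tsum_poiPMF_mul {u v : ℕ → ℝ} {C : ℝ}
    (huC : ∀ i, |u i| ≤ C) (hvC : ∀ i, |v i| ≤ C) {I : ℕ} (hu : ∀ i < I, u i = 0)
    (hv : ∀ i < I, v i = 0) (hvI : v I ≠ 0) :
    Tendsto (fun lam => (∑' i, poiPMF lam i * u i) / ∑' i, poiPMF lam i * v i) (𝓝[≠] 0)
      (𝓝 (u I / v I)) := by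
  have hfac : (I.factorial : ℝ) ≠ 0 := mod_cast I.factorial_ne_zero
  have hlim := (tendsto_tsum_poiPMF_mul_div_pow huC hu).div
    (tendsto_tsum_poiPMF_mul_div_pow hvC hv) (div_ne_zero hvI hfac)
  rw [div_div_div_cancel_right₀ hfac] at hlim
  refine hlim.congr' ?_
  filter_upwards [self_mem_nhdsWithin] with lam (hlam : lam ≠ 0)
  exact div_div_div_cancel_right₀ (pow_ne_zero I hlam) _ _

lemma massOn_cpPMF {p : ℕ → ℝ} (hpnn : ∀ k, 0 ≤ p k) (hpsum : HasSum p 1) {lam : ℝ}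
    (hlam : 0 ≤ lam) (P : ℕ → Prop) [DecidablePred P] :
    massOn (cpPMF lam p) P = ∑' i, poiPMF lam i * massOn (convPow p i) P := by
  set g : ℕ → ℕ → ℝ := fun i k => poiPMF lam i * if P k then convPow p i k else 0
  have hg : ∀ i k, 0 ≤ g i k := fun i k => mul_nonneg (poiPMF_nonneg hlam i)
    (by split_ifs <;> simp [convPow_nonneg hpnn i k])
  have hrow : ∀ i, Summable (g i) := fun i =>
    (summable_ite_of_nonneg P (convPow_nonneg hpnn i)
      (hasSum_convPow hpnn hpsum i).summable).mul_left _
  have hrowSum : ∀ i, ∑' k, g i k = poiPMF lam i * massOn (convPow p i) P :=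
    fun i => tsum_mul_left
  have hrowSum_le : ∀ i, ∑' k, g i k ≤ poiPMF lam i := fun i => by
    rw [hrowSum]
    exact mul_le_of_le_one_right (poiPMF_nonneg hlam i)
      (le_of_abs_le (abs_massOn_convPow_le_one hpnn hpsum P i))
  have hsummable : Summable (Function.uncurry g) :=
    (summable_prod_of_nonneg fun x => hg x.1 x.2).2 ⟨hrow,
      (summable_poiPMF lam).of_nonneg_of_le (fun i => tsum_nonneg (hg i)) hrowSum_le⟩
  calc massOn (cpPMF lam p) P = ∑' k, ∑' i, g i k := tsum_congr fun k => by
        split_ifs <;> simp [g, cpPMF, *]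
    _ = ∑' i, ∑' k, g i k := hsummable.tsum_comm
    _ = _ := tsum_congr hrowSum

section MinJumps

variable {p : ℕ → ℝ} {m : ℕ}

noncomputable def minJumps (p : ℕ → ℝ) (m : ℕ) : ℕ :=
  sInf {i : ℕ | 1 ≤ i ∧ 0 < massOn (convPow p i) (m ≤ ·)}

lemma massOn_convPow_self_eq_one (hp0 : p 0 = 0) (hpnn : ∀ k, 0 ≤ p k) (hpsum : HasSum p 1)
    (m : ℕ) : massOn (convPow p m) (m ≤ ·) = 1 :=
  (massOn_eq_tsum _ fun _ hk => convPow_eq_zero_of_lt hp0 (not_le.1 hk)).trans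
    (hasSum_convPow hpnn hpsum m).tsum_eq

lemma minJumps_spec (hp0 : p 0 = 0) (hpnn : ∀ k, 0 ≤ p k) (hpsum : HasSum p 1) (hm : 1 ≤ m) :
    1 ≤ minJumps p m ∧ 0 < massOn (convPow p (minJumps p m)) (m ≤ ·) :=
  Nat.sInf_mem (s := {i : ℕ | 1 ≤ i ∧ 0 < massOn (convPow p i) (m ≤ ·)})
    ⟨m, hm, by rw [massOn_convPow_self_eq_one hp0 hpnn hpsum]; exact one_pos⟩

lemma minJumps_one (hp0 : p 0 = 0) (hpnn : ∀ k, 0 ≤ p k) (hpsum : HasSum p 1) :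
    minJumps p 1 = 1 :=
  le_antisymm
    (Nat.sInf_le ⟨le_rfl, by rw [massOn_convPow_self_eq_one hp0 hpnn hpsum]; exact one_pos⟩)
    (minJumps_spec hp0 hpnn hpsum le_rfl).1

lemma massOn_convPow_eq_zero_of_lt_minJumps (hpnn : ∀ k, 0 ≤ p k) (hpsum : HasSum p 1)
    (hm : 1 ≤ m) (P : ℕ → Prop) [DecidablePred P] (hP : ∀ k, P k → m ≤ k) {i : ℕ}
    (hi : i < minJumps p m) : massOn (convPow p i) P = 0 := by
  have hnonneg := convPow_nonneg hpnn i
  have hIci : massOn (convPow p i) (m ≤ ·) = 0 := by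
    rcases Nat.eq_zero_or_pos i with rfl | hi1
    · refine (tsum_congr fun k => ?_).trans tsum_zero
      simp only [convPow]
      split_ifs <;> first | rfl | omega
    · exact le_antisymm (not_lt.1 fun hpos => Nat.notMem_of_lt_sInf hi ⟨hi1, hpos⟩)
        (massOn_nonneg _ hnonneg)
  exact le_antisymm
    ((massOn_mono P hnonneg (hasSum_convPow hpnn hpsum i).summable hP).trans_eq hIci)
    (massOn_nonneg P hnonneg)

lemma tendsto_massOn_cpPMF_div (hp0 : p 0 = 0) (hpnn : ∀ k, 0 ≤ p k) (hpsum : HasSum p 1)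
    (hm : 1 ≤ m) (P : ℕ → Prop) [DecidablePred P] (hP : ∀ k, P k → m ≤ k) :
    Tendsto (fun lam => massOn (cpPMF lam p) P / massOn (cpPMF lam p) (m ≤ ·)) (𝓝[>] 0)
      (𝓝 (massOn (convPow p (minJumps p m)) P /
        massOn (convPow p (minJumps p m)) (m ≤ ·))) := by
  have hlim := tendsto_tsum_poiPMF_mul_div_tsum_poiPMF_mul
    (abs_massOn_convPow_le_one hpnn hpsum P) (abs_massOn_convPow_le_one hpnn hpsum _)
    (fun _ => massOn_convPow_eq_zero_of_lt_minJumps hpnn hpsum hm P hP)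
    (fun _ => massOn_convPow_eq_zero_of_lt_minJumps hpnn hpsum hm _ fun _ => id)
    (minJumps_spec hp0 hpnn hpsum hm).2.ne'
  refine (hlim.mono_left (nhdsWithin_mono _ fun _ => ne_of_gt)).congr' ?_
  filter_upwards [self_mem_nhdsWithin] with lam (hlam : 0 < lam)
  rw [massOn_cpPMF hpnn hpsum hlam.le, massOn_cpPMF hpnn hpsum hlam.le]

end MinJumps

/-- Let `N^τ` be compound Poisson with rate `θτ` and cluster distribution
`p` on `{1,2,…}`, and let `I_m = min {i ≥ 1 | p^{*i}(ℤ_m) > 0}`.  Then for every `A ⊆ ℤ_m`,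
`P(N^τ ∈ A | N^τ ≥ m) → p^{*I_m}(A)/p^{*I_m}(ℤ_m)` as `τ → 0⁺`; in particular for `m = 1`
the limit distribution is `p` itself. -/
theorem stmt6 (θ : ℝ) (hθ : 0 < θ)
    (p : ℕ → ℝ) (hp0 : p 0 = 0) (hpnn : ∀ k, 0 ≤ p k) (hpsum : HasSum p 1)
    (m : ℕ) (hm : 1 ≤ m)
    (Im : ℕ)
    (hIm : Im = sInf {i : ℕ | 1 ≤ i ∧ 0 < ∑' k : ℕ, if m ≤ k then convPow p i k else 0}) :
    (∀ A : Set ℕ, A ⊆ Set.Ici m →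
      Tendsto
        (fun τ => (∑' k : ℕ, if k ∈ A then cpPMF (θ * τ) p k else 0) /
          (∑' k : ℕ, if m ≤ k then cpPMF (θ * τ) p k else 0))
        (𝓝[>] (0:ℝ))
        (𝓝 ((∑' k : ℕ, if k ∈ A then convPow p Im k else 0) /
          (∑' k : ℕ, if m ≤ k then convPow p Im k else 0)))) ∧
    (m = 1 → ∀ A : Set ℕ, A ⊆ Set.Ici 1 →
      Tendsto
        (fun τ => (∑' k : ℕ, if k ∈ A then cpPMF (θ * τ) p k else 0) /
          (∑' k : ℕ, if 1 ≤ k then cpPMF (θ * τ) p k else 0))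
        (𝓝[>] (0:ℝ))
        (𝓝 (∑' k : ℕ, if k ∈ A then p k else 0))) := by
  have hscale : Tendsto (θ * ·) (𝓝[>] (0 : ℝ)) (𝓝[>] 0) :=
    tendsto_iff_comap.2 (comap_mulLeft_nhdsGT_zero hθ).ge
  subst hIm
  refine ⟨fun A hA => (tendsto_massOn_cpPMF_div hp0 hpnn hpsum hm (· ∈ A) hA).comp hscale, ?_⟩
  rintro rfl A hA
  have hlim := (tendsto_massOn_cpPMF_div hp0 hpnn hpsum hm (· ∈ A) hA).comp hscale
  rwa [minJumps_one hp0 hpnn hpsum, massOn_convPow_self_eq_one hp0 hpnn hpsum, div_one,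
    convPow_one] at hlim
end

section
/- Let m be a nonnegative integer, r > 0 and 0 < p < 1. A random variable W taking values in ℤ_m = {m, m+1, …} with E W < ∞ has distribution NB^{(m)}(r,p) if and only if for every bounded function g_m on ℤ_m, E[ p(r + W) g_m(W + 1) − W g_m(W) 1{W > m} ] = 0. -/
open MeasureTheory Filter Set Topology Classical

/-- The negative binomial probability mass function:
`P(Z = k) = Γ(r+k)/(Γ(r) k!) (1-p)^r p^k`. -/
noncomputable def nbPMF (r p : ℝ) (k : ℕ) : ℝ :=
  Real.Gamma (r + k) / (Real.Gamma r * (k.factorial : ℝ)) * (1 - p) ^ r * p ^ k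

/-!
The Stein identity is a summation by parts. The weights `π k` of `NB^{(m)}(r,p)` satisfy
`(k + 1) π (k + 1) = p (r + k) π k` for `k ≥ m`, so in the sum
`∑ π k (p (r + k) g (k + 1) - k g k 1{k > m})` the first part at `k` cancels the second part at
`k + 1`, and the indicator removes the term at `k = m`. Conversely, testing the identity with
`g = 1{n + 1}` gives the same recurrence for the law `q k = P(W = k)` from `m` on, so `q` is
proportional to `nbPMF` on `ℤ_m`, and `∑ q = 1` fixes the constant. Since `E W < ∞`, the Stein
integrand is integrable for bounded `g`, so both expectations are sums over the law of `W`.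
-/

lemma tsum_sub_eq_zero_of_shift {G : Type*} [AddCommGroup G] [TopologicalSpace G]
    [IsTopologicalAddGroup G] [T2Space G] {a b : ℕ → G} (ha : Summable a) (hb₀ : b 0 = 0)
    (hab : ∀ k, b (k + 1) = a k) : ∑' k, (a k - b k) = 0 := by
  have hb : Summable b := (summable_nat_add_iff 1).1 (by simpa only [hab] using ha)
  rw [ha.tsum_sub hb, hb.tsum_eq_zero_add, hb₀, zero_add]
  simp only [hab, sub_self]

lemma mul_eq_mul_of_forall_mul_succ_eq {M : Type*} [CommMonoidWithZero M] [IsCancelMulZero M]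
    {a c x y : ℕ → M} {m : ℕ} (hc : ∀ n, m ≤ n → c n ≠ 0)
    (hx : ∀ n, m ≤ n → c n * x (n + 1) = a n * x n)
    (hy : ∀ n, m ≤ n → c n * y (n + 1) = a n * y n) :
    ∀ k, m ≤ k → x m * y k = y m * x k := by
  intro k hk
  induction k, hk using Nat.le_induction with
  | base => exact mul_comm _ _
  | succ n hn ih =>
    refine mul_left_cancel₀ (hc n hn) ?_
    calc c n * (x m * y (n + 1))
        = a n * (x m * y n) := by rw [mul_left_comm, hy n hn, mul_left_comm]
      _ = a n * (y m * x n) := by rw [ih]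
      _ = c n * (y m * x (n + 1)) := by rw [mul_left_comm, ← hx n hn, mul_left_comm]

lemma integral_comp_eq_tsum_measureReal {Ω α E : Type*} [MeasurableSpace Ω] [MeasurableSpace α]
    [MeasurableSingletonClass α] [Countable α] [NormedAddCommGroup E] [NormedSpace ℝ E]
    [CompleteSpace E] {μ : Measure Ω} {W : Ω → α} (hW : Measurable W) {f : α → E}
    (hf : Integrable (fun ω => f (W ω)) μ) :
    ∫ ω, f (W ω) ∂μ = ∑' a, μ.real (W ⁻¹' {a}) • f a := by
  have hfm : AEStronglyMeasurable f (μ.map W) := StronglyMeasurable.of_discrete.aestronglyMeasurable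
  rw [← integral_map hW.aemeasurable hfm,
    integral_countable ((integrable_map_measure hfm hW.aemeasurable).2 hf)]
  simp only [map_measureReal_apply hW (measurableSet_singleton _)]

lemma nbPMF_pos {r p : ℝ} (hr : 0 < r) (hp0 : 0 < p) (hp1 : p < 1) (k : ℕ) :
    0 < nbPMF r p k := by
  have hΓk : 0 < Real.Gamma (r + k) := Real.Gamma_pos_of_pos (by positivity)
  have hΓ : 0 < Real.Gamma r := Real.Gamma_pos_of_pos hr
  have hq : 0 < (1 - p) ^ r := Real.rpow_pos_of_pos (by linarith) r
  unfold nbPMF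
  positivity

lemma succ_mul_nbPMF_succ {r : ℝ} (hr : 0 < r) (p : ℝ) (k : ℕ) :
    ((k : ℝ) + 1) * nbPMF r p (k + 1) = p * (r + k) * nbPMF r p k := by
  have hΓ : Real.Gamma (r + (k + 1 : ℕ)) = (r + k) * Real.Gamma (r + k) := by
    rw [Nat.cast_succ, ← add_assoc, Real.Gamma_add_one (by positivity)]
  unfold nbPMF
  rw [hΓ, Nat.factorial_succ, Nat.cast_mul, Nat.cast_succ]
  field_simp
  ring

lemma summable_add_mul_nbPMF {r p : ℝ} (hr : 0 < r) (hp0 : 0 < p) (hp1 : p < 1) :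
    Summable fun k : ℕ => (r + k) * nbPMF r p k := by
  refine summable_of_ratio_test_tendsto_lt_one hp1
    (.of_forall fun k => (mul_pos (by positivity) (nbPMF_pos hr hp0 hp1 k)).ne') ?_
  have hratio : ∀ k : ℕ, ‖(r + (k + 1 : ℕ)) * nbPMF r p (k + 1)‖ / ‖(r + k) * nbPMF r p k‖
      = p * (1 + r * (1 / ((k : ℝ) + 1))) := by
    intro k
    have hk : nbPMF r p (k + 1) = p * (r + k) * nbPMF r p k / ((k : ℝ) + 1) := by
      rw [← succ_mul_nbPMF_succ hr]; field_simp
    have hπk := nbPMF_pos hr hp0 hp1 k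
    have hπk₁ := nbPMF_pos hr hp0 hp1 (k + 1)
    rw [Real.norm_of_nonneg (by positivity), Real.norm_of_nonneg (by positivity), hk]
    push_cast
    field_simp
    ring
  simp_rw [hratio]
  simpa using ((tendsto_one_div_add_atTop_nhds_zero_nat (𝕜 := ℝ)).const_mul r).const_add 1
    |>.const_mul p

def nbSteinOp (m : ℕ) (r p : ℝ) (g : ℕ → ℝ) (k : ℕ) : ℝ :=
  p * (r + k) * g (k + 1) - k * g k * (if m < k then 1 else 0)

lemma abs_nbSteinOp_le {m : ℕ} {r p C : ℝ} (hr : 0 ≤ r) (hp : 0 ≤ p) {g : ℕ → ℝ}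
    (hC : ∀ k, |g k| ≤ C) (k : ℕ) :
    |nbSteinOp m r p g k| ≤ (p * (r + k) + k) * C := by
  have hC0 : 0 ≤ C := (abs_nonneg _).trans (hC 0)
  have hind : |(if m < k then 1 else 0 : ℝ)| ≤ 1 := by split_ifs <;> simp
  calc |nbSteinOp m r p g k|
      ≤ |p * (r + k)| * |g (k + 1)| + |(k : ℝ)| * |g k| * |(if m < k then 1 else 0 : ℝ)| := by
        refine (abs_sub _ _).trans_eq ?_
        simp only [abs_mul]
    _ ≤ p * (r + k) * C + k * C * 1 := by
        rw [abs_of_nonneg (by positivity), Nat.abs_cast]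
        gcongr <;> exact hC _
    _ = (p * (r + k) + k) * C := by ring

lemma nbSteinOp_single {m n : ℕ} (hn : m ≤ n) (r p : ℝ) (k : ℕ) :
    nbSteinOp m r p (Pi.single (n + 1) 1) k
      = (Pi.single n (p * (r + n)) : ℕ → ℝ) k - (Pi.single (n + 1) ((n : ℝ) + 1) : ℕ → ℝ) k := by
  unfold nbSteinOp
  rcases eq_or_ne k n with rfl | hkn
  · simp
  rcases eq_or_ne k (n + 1) with rfl | hkn'
  · simp [Nat.lt_succ_of_le hn]
  · simp [hkn, hkn']

lemma tsum_truncated_nbPMF_mul_nbSteinOp {m : ℕ} {r p C : ℝ} (hr : 0 < r) (hp0 : 0 < p)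
    (hp1 : p < 1) {g : ℕ → ℝ} (hC : ∀ k, |g k| ≤ C) :
    ∑' k, (if m ≤ k then nbPMF r p k else 0) * nbSteinOp m r p g k = 0 := by
  set x : ℕ → ℝ := fun k => if m ≤ k then nbPMF r p k else 0
  have hx : ∀ k, |x k| ≤ nbPMF r p k := fun k => by
    have hπ := nbPMF_pos hr hp0 hp1 k
    by_cases hk : m ≤ k <;> simp [x, hk, abs_of_pos hπ, hπ.le]
  have key := tsum_sub_eq_zero_of_shift (a := fun k => x k * (p * (r + k) * g (k + 1)))
    (b := fun k => x k * (k * g k * (if m < k then 1 else 0))) ?_ (by simp) ?_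
  · simpa only [nbSteinOp, mul_sub] using key
  · refine .of_norm_bounded ((summable_add_mul_nbPMF hr hp0 hp1).mul_left (p * C)) fun k => ?_
    rw [Real.norm_eq_abs, abs_mul, abs_mul, abs_of_nonneg (by positivity : 0 ≤ p * (r + k))]
    calc |x k| * (p * (r + k) * |g (k + 1)|) ≤ nbPMF r p k * (p * (r + k) * C) := by
          gcongr
          exacts [(nbPMF_pos hr hp0 hp1 k).le, hx k, hC _]
      _ = p * C * ((r + k) * nbPMF r p k) := by ring
  · intro k
    by_cases hk : m ≤ k
    · simp only [x, if_pos hk, if_pos (hk.trans k.le_succ), if_pos (Nat.lt_succ_of_le hk),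
        Nat.cast_succ]
      linear_combination g (k + 1) * succ_mul_nbPMF_succ hr p k
    · simp [x, hk, show ¬ m < k + 1 by omega]

lemma succ_mul_eq_of_tsum_mul_nbSteinOp_eq_zero {m : ℕ} {r p : ℝ} {q : ℕ → ℝ}
    (hq : ∀ g : ℕ → ℝ, (∃ C, ∀ k, |g k| ≤ C) → ∑' k, q k * nbSteinOp m r p g k = 0)
    {n : ℕ} (hn : m ≤ n) :
    ((n : ℝ) + 1) * q (n + 1) = p * (r + n) * q n := by
  have hbdd : ∀ k, |(Pi.single (n + 1) 1 : ℕ → ℝ) k| ≤ 1 := fun k => by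
    rcases eq_or_ne k (n + 1) with rfl | hk <;> simp [*]
  have hsum : HasSum (fun k => q k * nbSteinOp m r p (Pi.single (n + 1) 1) k)
      (q n * (p * (r + n)) - q (n + 1) * ((n : ℝ) + 1)) := by
    simp only [nbSteinOp_single hn, mul_sub, ← Pi.single_mul_right_apply]
    exact (hasSum_pi_single _ _).sub (hasSum_pi_single _ _)
  linear_combination -hsum.tsum_eq.symm.trans (hq _ ⟨1, hbdd⟩)

lemma eq_condNB_iff_tsum_mul_nbSteinOp_eq_zero {m : ℕ} {r p : ℝ} (hr : 0 < r) (hp0 : 0 < p)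
    (hp1 : p < 1) {q : ℕ → ℝ} (hq_lt : ∀ k < m, q k = 0) (hq_sum : ∑' k, q k = 1) :
    (∀ k, q k = if m ≤ k then nbPMF r p k / (∑' j, if m ≤ j then nbPMF r p j else 0) else 0) ↔
      ∀ g : ℕ → ℝ, (∃ C, ∀ k, |g k| ≤ C) → ∑' k, q k * nbSteinOp m r p g k = 0 := by
  set S := ∑' j, if m ≤ j then nbPMF r p j else 0
  constructor
  · rintro hq g ⟨C, hC⟩
    calc ∑' k, q k * nbSteinOp m r p g k
        = ∑' k, (if m ≤ k then nbPMF r p k else 0) * nbSteinOp m r p g k / S :=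
          tsum_congr fun k => by rw [hq k]; split_ifs <;> ring
      _ = 0 := by rw [tsum_div_const, tsum_truncated_nbPMF_mul_nbSteinOp hr hp0 hp1 hC, zero_div]
  · intro hq
    have hprop : ∀ k, q m * (if m ≤ k then nbPMF r p k else 0) = nbPMF r p m * q k := by
      intro k
      by_cases hk : m ≤ k
      · rw [if_pos hk]
        refine mul_eq_mul_of_forall_mul_succ_eq (c := fun n => (n : ℝ) + 1)
          (fun n _ => by positivity) (fun n hn => succ_mul_eq_of_tsum_mul_nbSteinOp_eq_zero hq hn)
          (fun n _ => succ_mul_nbPMF_succ hr p n) k hk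
      · rw [if_neg hk, hq_lt k (not_le.1 hk), mul_zero, mul_zero]
    have hnorm : q m * S = nbPMF r p m := by
      rw [← tsum_mul_left, tsum_congr hprop, tsum_mul_left, hq_sum, mul_one]
    have hm := nbPMF_pos hr hp0 hp1 m
    have hS : S ≠ 0 := right_ne_zero_of_mul (hnorm ▸ hm.ne')
    intro k
    split_ifs with hk
    · rw [eq_div_iff hS]
      refine mul_left_cancel₀ hm.ne' ?_
      have := hprop k
      rw [if_pos hk] at this
      linear_combination -S * this + nbPMF r p k * hnorm
    · exact hq_lt k (not_le.1 hk)

lemma integrable_nbSteinOp_comp {Ω : Type*} [MeasurableSpace Ω] {μ : Measure Ω}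
    [IsFiniteMeasure μ] {W : Ω → ℕ} (hW : Measurable W)
    (hint : Integrable (fun ω => (W ω : ℝ)) μ) (m : ℕ) {r p C : ℝ} (hr : 0 ≤ r) (hp : 0 ≤ p)
    {g : ℕ → ℝ} (hC : ∀ k, |g k| ≤ C) :
    Integrable (fun ω => nbSteinOp m r p g (W ω)) μ := by
  refine .mono' ((hint.const_mul (p * C + C)).add (integrable_const (p * r * C)))
    ((measurable_of_countable (nbSteinOp m r p g)).comp hW).aestronglyMeasurable
    (.of_forall fun ω => ?_)
  refine (abs_nbSteinOp_le hr hp hC _).trans_eq ?_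
  simp only [Pi.add_apply]
  ring

/-- Stein characterization of the conditional negative binomial
distribution `NB^{(m)}(r,p)`: a random variable `W` with values in `ℤ_m` and `E W < ∞` has
law `NB^{(m)}(r,p)` iff `E[p(r+W) g(W+1) − W g(W) 1{W > m}] = 0` for every bounded `g`. -/
theorem stmt9 {Ω : Type*} [MeasurableSpace Ω] (μ : Measure Ω) [IsProbabilityMeasure μ]
    (m : ℕ) (r p : ℝ) (hr : 0 < r) (hp0 : 0 < p) (hp1 : p < 1)
    (W : Ω → ℕ) (hW : Measurable W) (hWm : ∀ ω, m ≤ W ω)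
    (hint : Integrable (fun ω => (W ω : ℝ)) μ) :
    (∀ k : ℕ, (μ {ω | W ω = k}).toReal =
        (if m ≤ k then
          nbPMF r p k / (∑' j : ℕ, if m ≤ j then nbPMF r p j else 0)
        else 0)) ↔
    (∀ g : ℕ → ℝ, (∃ C, ∀ k, |g k| ≤ C) →
      ∫ ω, (p * (r + (W ω : ℝ)) * g (W ω + 1) -
        (W ω : ℝ) * g (W ω) * (if m < W ω then 1 else 0)) ∂μ = 0) := by
  have hexp : ∀ f : ℕ → ℝ, Integrable (fun ω => f (W ω)) μ →
      ∫ ω, f (W ω) ∂μ = ∑' k, μ.real (W ⁻¹' {k}) * f k :=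
    fun f hf => integral_comp_eq_tsum_measureReal hW hf
  have hq_lt : ∀ k < m, μ.real (W ⁻¹' {k}) = 0 := fun k hk => by
    have : W ⁻¹' {k} = ∅ :=
      eq_empty_of_forall_notMem fun ω (hω : W ω = k) => (hWm ω).not_gt (hω ▸ hk)
    rw [this, measureReal_empty]
  have hq_sum : ∑' k, μ.real (W ⁻¹' {k}) = 1 := by
    simpa using (hexp 1 (integrable_const 1)).symm
  refine (eq_condNB_iff_tsum_mul_nbSteinOp_eq_zero hr hp0 hp1 hq_lt hq_sum).trans
    (forall₂_congr fun g ⟨C, hC⟩ => ?_)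
  rw [← hexp _ (integrable_nbSteinOp_comp hW hint m hr.le hp0.le hC)]
  rfl
end
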